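/- If a_{1,1} > a_{2,1} and a_{1,2} > a_{2,2} (species 1 is a cheater) then in the two-type mean-field model du/dt = h(u), h(u) > 0 for all u in (0,1), hence every solution with u(0) in (0,1) converges to 1. -/

import Mathlib

noncomputable def twoTypeH (a11 a12 a21 a22 : ℝ) (u : ℝ) : ℝ :=
  (a12 / (a12 * u + a22 * (1 - u)) - a21 / (a11 * u + a21 * (1 - u))) * u * (1 - u)

/-!
Writing `h(u) = g(u) u (1 - u)`, the payoff gap `g` of the two types is positive on `[0, 1]`: clearing
denominators it becomes `a₁₂ (a₁₁ - a₂₁) u + a₂₁ (a₁₂ - a₂₂) (1 - u)`. Hence `h > 0` on `(0, 1)` and, by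
continuity of `g` at `1`, `h < 0` just above `1`. A solution of `u' = h(u)` can cross neither the level
`u(0)`, where `h > 0`, nor levels just above `1`, where `h < 0`; so it stays in `[u(0), 1]`, is
nondecreasing and converges. Its limit is an equilibrium (mean value theorem on `[t, t + 1]`), and
the only equilibrium in `[u(0), 1]` is `1`.
-/

open Filter Set Topology

section AutonomousODE

variable {f y : ℝ → ℝ} {a : ℝ}

theorem le_of_hasDerivAt_of_neg (hy : ∀ t, a ≤ t → HasDerivAt y (f (y t)) t) {v : ℝ}
    (hv : f v < 0) (ha : y a ≤ v) {t : ℝ} (ht : a ≤ t) : y t ≤ v :=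
  image_le_of_deriv_right_lt_deriv_boundary (f' := fun s => f (y s)) (B := fun _ => v) (B' := 0)
    (fun s hs => (hy s hs.1).continuousAt.continuousWithinAt)
    (fun s hs => (hy s hs.1).hasDerivWithinAt) ha (fun _ => hasDerivAt_const _ _)
    (fun _ _ hs => by simpa [hs] using hv) ⟨ht, le_rfl⟩

theorem le_of_hasDerivAt_of_pos (hy : ∀ t, a ≤ t → HasDerivAt y (f (y t)) t) {v : ℝ}
    (hv : 0 < f v) (ha : v ≤ y a) {t : ℝ} (ht : a ≤ t) : v ≤ y t := by
  have := le_of_hasDerivAt_of_neg (f := fun w => -f (-w)) (y := -y) (v := -v)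
    (fun s hs => by simpa using (hy s hs).neg) (by simpa using hv) (by simpa using ha) ht
  simpa using this

theorem le_of_hasDerivAt_of_eventually_neg (hy : ∀ t, a ≤ t → HasDerivAt y (f (y t)) t) {c : ℝ}
    (hf : ∀ᶠ v in 𝓝[>] c, f v < 0) (ha : y a ≤ c) {t : ℝ} (ht : a ≤ t) : y t ≤ c :=
  ge_of_tendsto (tendsto_nhdsWithin_of_tendsto_nhds tendsto_id) <| by
    filter_upwards [hf, self_mem_nhdsWithin] with v hv hcv
    exact le_of_hasDerivAt_of_neg hy hv (ha.trans (le_of_lt hcv)) ht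

theorem eq_zero_of_hasDerivAt_of_tendsto (hy : ∀ t, a ≤ t → HasDerivAt y (f (y t)) t) {L : ℝ}
    (hL : Tendsto y atTop (𝓝 L)) (hf : ContinuousAt f L) : f L = 0 := by
  have hmvt : ∀ t, a ≤ t → ∃ ξ ∈ Ioo t (t + 1), f (y ξ) = y (t + 1) - y t := fun t ht => by
    obtain ⟨ξ, hξ, h⟩ := exists_hasDerivAt_eq_slope y (fun s => f (y s)) (lt_add_one t)
      (fun s hs => (hy s (ht.trans hs.1)).continuousAt.continuousWithinAt)
      (fun s hs => hy s (ht.trans hs.1.le))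
    exact ⟨ξ, hξ, by simpa using h⟩
  choose! ξ hξ hfξ using hmvt
  have hξ_top : Tendsto ξ atTop atTop :=
    tendsto_atTop_mono' _ ((eventually_ge_atTop a).mono fun t ht => (hξ t ht).1.le) tendsto_id
  have hslope : Tendsto (fun t => y (t + 1) - y t) atTop (𝓝 0) := by
    simpa using (hL.comp (tendsto_atTop_add_const_right _ 1 tendsto_id)).sub hL
  exact tendsto_nhds_unique ((hf.tendsto.comp (hL.comp hξ_top)).congr'
    ((eventually_ge_atTop a).mono hfξ)) hslope

theorem monotoneOn_Ici_of_hasDerivAt_nonneg {y' : ℝ → ℝ} (hy : ∀ t, a ≤ t → HasDerivAt y (y' t) t)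
    (hy' : ∀ t, a ≤ t → 0 ≤ y' t) : MonotoneOn y (Ici a) :=
  monotoneOn_of_hasDerivWithinAt_nonneg (convex_Ici a)
    (fun t ht => (hy t ht).continuousAt.continuousWithinAt)
    (fun t ht => (hy t (interior_subset ht)).hasDerivWithinAt)
    (fun t ht => hy' t (interior_subset ht))

theorem MonotoneOn.exists_tendsto_atTop (hmono : MonotoneOn y (Ici a)) {M : ℝ}
    (hM : ∀ t, a ≤ t → y t ≤ M) : ∃ L, Tendsto y atTop (𝓝 L) := by
  have hz : Monotone fun t => y (max t a) := fun s t hst =>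
    hmono (le_max_right s a) (le_max_right t a) (max_le_max hst le_rfl)
  refine ⟨_, (tendsto_atTop_ciSup hz ⟨M, ?_⟩).congr' ?_⟩
  · rintro _ ⟨t, rfl⟩
    exact hM _ (le_max_right t a)
  · filter_upwards [eventually_ge_atTop a] with t ht
    rw [max_eq_left ht]

end AutonomousODE

theorem mul_add_mul_one_sub_pos {p q u : ℝ} (hp : 0 < p) (hq : 0 < q) (hu : u ∈ Icc (0 : ℝ) 1) :
    0 < p * u + q * (1 - u) := by
  nlinarith [mul_le_mul_of_nonneg_right (min_le_left p q) hu.1,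
    mul_le_mul_of_nonneg_right (min_le_right p q) (sub_nonneg.2 hu.2), lt_min hp hq]

noncomputable def twoTypeGap (a11 a12 a21 a22 u : ℝ) : ℝ :=
  a12 / (a12 * u + a22 * (1 - u)) - a21 / (a11 * u + a21 * (1 - u))

section TwoType

variable {a11 a12 a21 a22 u : ℝ}

theorem twoTypeH_eq_gap_mul (a11 a12 a21 a22 u : ℝ) :
    twoTypeH a11 a12 a21 a22 u = twoTypeGap a11 a12 a21 a22 u * u * (1 - u) :=
  rfl

theorem twoTypeGap_pos (h21 : 0 < a21) (h22 : 0 < a22) (hch1 : a21 < a11) (hch2 : a22 < a12)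
    (hu : u ∈ Icc (0 : ℝ) 1) : 0 < twoTypeGap a11 a12 a21 a22 u := by
  have hD1 := mul_add_mul_one_sub_pos (h22.trans hch2) h22 hu
  have hD2 := mul_add_mul_one_sub_pos (h21.trans hch1) h21 hu
  rw [twoTypeGap, sub_pos, div_lt_div_iff₀ hD2 hD1]
  have hcross : a12 * (a11 * u + a21 * (1 - u)) - a21 * (a12 * u + a22 * (1 - u)) =
      (a12 * (a11 - a21)) * u + (a21 * (a12 - a22)) * (1 - u) := by ring
  have := mul_add_mul_one_sub_pos (mul_pos (h22.trans hch2) (sub_pos.2 hch1))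
    (mul_pos h21 (sub_pos.2 hch2)) hu
  linarith

theorem continuousAt_twoTypeGap (h21 : 0 < a21) (h22 : 0 < a22) (hch1 : a21 < a11)
    (hch2 : a22 < a12) (hu : u ∈ Icc (0 : ℝ) 1) :
    ContinuousAt (twoTypeGap a11 a12 a21 a22) u := by
  have hD1 := mul_add_mul_one_sub_pos (h22.trans hch2) h22 hu
  have hD2 := mul_add_mul_one_sub_pos (h21.trans hch1) h21 hu
  show ContinuousAt (fun v => a12 / (a12 * v + a22 * (1 - v)) - a21 / (a11 * v + a21 * (1 - v))) u
  fun_prop (disch := first | exact hD1.ne' | exact hD2.ne')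

theorem twoTypeH_pos (h21 : 0 < a21) (h22 : 0 < a22) (hch1 : a21 < a11) (hch2 : a22 < a12)
    (hu : u ∈ Ioo (0 : ℝ) 1) : 0 < twoTypeH a11 a12 a21 a22 u :=
  mul_pos (mul_pos (twoTypeGap_pos h21 h22 hch1 hch2 (Ioo_subset_Icc_self hu)) hu.1)
    (sub_pos.2 hu.2)

theorem twoTypeH_nonneg (h21 : 0 < a21) (h22 : 0 < a22) (hch1 : a21 < a11) (hch2 : a22 < a12)
    (hu : u ∈ Icc (0 : ℝ) 1) : 0 ≤ twoTypeH a11 a12 a21 a22 u :=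
  mul_nonneg (mul_nonneg (twoTypeGap_pos h21 h22 hch1 hch2 hu).le hu.1) (sub_nonneg.2 hu.2)

theorem continuousAt_twoTypeH (h21 : 0 < a21) (h22 : 0 < a22) (hch1 : a21 < a11)
    (hch2 : a22 < a12) (hu : u ∈ Icc (0 : ℝ) 1) : ContinuousAt (twoTypeH a11 a12 a21 a22) u :=
  ((continuousAt_twoTypeGap h21 h22 hch1 hch2 hu).mul continuousAt_id).mul
    (continuousAt_const.sub continuousAt_id)

theorem twoTypeH_eventually_neg (h21 : 0 < a21) (h22 : 0 < a22) (hch1 : a21 < a11)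
    (hch2 : a22 < a12) : ∀ᶠ v in 𝓝[>] 1, twoTypeH a11 a12 a21 a22 v < 0 := by
  have hgap : ∀ᶠ v in 𝓝 1, 0 < twoTypeGap a11 a12 a21 a22 v :=
    continuousAt_const.eventually_lt
      (continuousAt_twoTypeGap h21 h22 hch1 hch2 (right_mem_Icc.2 zero_le_one)) (twoTypeGap_pos h21 h22 hch1 hch2 (right_mem_Icc.2 zero_le_one))
  filter_upwards [nhdsWithin_le_nhds hgap, self_mem_nhdsWithin] with v hv hv1
  rw [twoTypeH_eq_gap_mul]
  exact mul_neg_of_pos_of_neg (mul_pos hv (zero_lt_one.trans hv1)) (sub_neg.2 hv1)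

end TwoType

theorem cheater_wins_general
    (a11 a12 a21 a22 : ℝ)
    (h21 : 0 < a21) (h22 : 0 < a22)
    (hch1 : a21 < a11) (hch2 : a22 < a12) :
    (∀ u ∈ Set.Ioo (0 : ℝ) 1, 0 < twoTypeH a11 a12 a21 a22 u) ∧
    (∀ y : ℝ → ℝ,
      (∀ t, 0 ≤ t → HasDerivAt y (twoTypeH a11 a12 a21 a22 (y t)) t) →
      y 0 ∈ Set.Ioo (0 : ℝ) 1 →
      Filter.Tendsto y Filter.atTop (nhds 1)) := by
  have hpos := fun u (hu : u ∈ Ioo (0 : ℝ) 1) => twoTypeH_pos h21 h22 hch1 hch2 hu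
  refine ⟨hpos, fun y hy hy0 => ?_⟩
  have hbound : ∀ t, 0 ≤ t → y t ∈ Icc (y 0) 1 := fun t ht =>
    ⟨le_of_hasDerivAt_of_pos hy (hpos _ hy0) le_rfl ht,
      le_of_hasDerivAt_of_eventually_neg hy (twoTypeH_eventually_neg h21 h22 hch1 hch2)
        hy0.2.le ht⟩
  have hIcc : ∀ {u}, u ∈ Icc (y 0) 1 → u ∈ Icc (0 : ℝ) 1 := fun hu => ⟨hy0.1.le.trans hu.1, hu.2⟩
  have hmono : MonotoneOn y (Ici 0) := monotoneOn_Ici_of_hasDerivAt_nonneg hy fun t ht =>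
    twoTypeH_nonneg h21 h22 hch1 hch2 (hIcc (hbound t ht))
  obtain ⟨L, hL⟩ := hmono.exists_tendsto_atTop fun t ht => (hbound t ht).2
  have hL_mem : L ∈ Icc (y 0) 1 :=
    isClosed_Icc.mem_of_tendsto hL ((eventually_ge_atTop 0).mono hbound)
  have hL_eq := eq_zero_of_hasDerivAt_of_tendsto hy hL
    (continuousAt_twoTypeH h21 h22 hch1 hch2 (hIcc hL_mem))
  obtain rfl | hlt := hL_mem.2.eq_or_lt
  · exact hL
  · exact absurd hL_eq (hpos L ⟨hy0.1.trans_le hL_mem.1, hlt⟩).ne'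

theorem cheater_wins
    (a11 a12 a21 a22 : ℝ)
    (h11 : 0 < a11) (h12 : 0 < a12) (h21 : 0 < a21) (h22 : 0 < a22)
    (hch1 : a21 < a11) (hch2 : a22 < a12) :
    (∀ u ∈ Set.Ioo (0 : ℝ) 1, 0 < twoTypeH a11 a12 a21 a22 u) ∧
    (∀ y : ℝ → ℝ,
      (∀ t, 0 ≤ t → HasDerivAt y (twoTypeH a11 a12 a21 a22 (y t)) t) →
      y 0 ∈ Set.Ioo (0 : ℝ) 1 →
      Filter.Tendsto y Filter.atTop (nhds 1)) :=
  cheater_wins_general a11 a12 a21 a22 h21 h22 hch1 hch2
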